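/- arXiv:1801.02868 — 12 statements merged into one kernel-verified Lean document; each statement's English description precedes it below -/
import Mathlib

section
/- Let L be an n×N matrix over F_q and let I be the set of all vectors z in F_q^n such that for some i in [m], 1 ≤ wt(z_{X_i}) ≤ 2δ. Then L is a valid encoder matrix for the BNSI problem (i.e., every receiver u_i can recover x_{X_i} from xL together with any side information x_{X_i} + ε_i with wt(ε_i) ≤ δ) if and only if zL ≠ 0 for every z ∈ I. -/
open Matrix

/-- Hamming weight of `z` restricted to the coordinates in `S`. -/
def wtOn {ι F : Type*} [Zero F] [DecidableEq F] (S : Finset ι) (z : ι → F) : ℕ :=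
  (S.filter fun j => z j ≠ 0).card

/-- Hamming weight of a vector. -/
def wt {ι F : Type*} [Fintype ι] [Zero F] [DecidableEq F] (z : ι → F) : ℕ :=
  (Finset.univ.filter fun j => z j ≠ 0).card

/-- `L` is a valid encoder matrix for the BNSI problem with demand sets `X` and error
bound `δ` iff `z ⬝ᵥ L ≠ 0` for every `z` with `1 ≤ wt(z_{X i}) ≤ 2δ` for some receiver `i`. -/
def ValidEncoder {κ ι F : Type*} [Fintype ι] [Field F] [DecidableEq F] {N : ℕ}
    (X : κ → Finset ι) (δ : ℕ) (L : Matrix ι (Fin N) F) : Prop :=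
  ∀ z : ι → F, (∃ i, 1 ≤ wtOn (X i) z ∧ wtOn (X i) z ≤ 2 * δ) → Matrix.vecMul z L ≠ 0

/-- Optimal codelength of a linear coding scheme for the BNSI problem over `F`. -/
noncomputable def Nopt (F : Type*) [Field F] [DecidableEq F] {κ ι : Type*} [Fintype ι]
    (X : κ → Finset ι) (δ : ℕ) : ℕ :=
  sInf {N : ℕ | ∃ L : Matrix ι (Fin N) F, ValidEncoder X δ L}

/-- `Φ(B)`: the collection of non-empty `C ⊆ [n]` such that every demand set meets `C`
in either `0` or at least `2δ+1` elements. -/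
def Phi {m n : ℕ} (X : Fin m → Finset (Fin n)) (δ : ℕ) : Set (Finset (Fin n)) :=
  {C | C.Nonempty ∧ ∀ i, (X i ∩ C).card = 0 ∨ 2 * δ + 1 ≤ (X i ∩ C).card}

/-!
A receiver can decode iff no two messages with the same codeword `xL` have demanded parts at
Hamming distance between `1` and `2δ`. If two such messages exist, a word lying within `δ` of
both demanded parts is corrupted side information consistent with either message; otherwise
any message consistent with `xL` and within `δ` of the side information has the right demanded
part. By linearity, such pairs `x, x'` correspond to the vectors `z = x - x'` with `zL = 0`.
-/

open Finset

lemma exists_hammingDist_le_of_hammingDist_le_add {ι : Type*} [Fintype ι] {β : ι → Type*}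
    [∀ i, DecidableEq (β i)] {u v : ∀ i, β i} {a b : ℕ} (h : hammingDist u v ≤ a + b) :
    ∃ w, hammingDist u w ≤ a ∧ hammingDist w v ≤ b := by
  classical
  set Δ : Finset ι := {i | u i ≠ v i}
  have hΔ : hammingDist u v = #Δ := rfl
  obtain ⟨T, hTΔ, hT⟩ := exists_subset_card_eq (min_le_right a #Δ)
  refine ⟨fun i => if i ∈ T then v i else u i, ?_, ?_⟩
  · calc hammingDist u _ ≤ #T := card_le_card fun i hi => by
          by_contra hiT
          simp [hiT] at hi
      _ ≤ a := hT ▸ min_le_left _ _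
  · calc hammingDist _ v ≤ #(Δ \ T) := card_le_card fun i hi => by
          by_cases hiT : i ∈ T
          · simp [hiT] at hi
          · simp_all [Δ]
      _ = #Δ - #T := card_sdiff_of_subset hTΔ
      _ ≤ b := by omega

theorem exists_decoder_iff {α β ι F : Type*} [Fintype ι] [AddGroup F] [DecidableEq F]
    (f : α → β) (g : α → ι → F) (δ : ℕ) :
    (∃ D : β → (ι → F) → ι → F, ∀ x ε, hammingNorm ε ≤ δ → D (f x) (g x + ε) = g x) ↔
      ∀ x x', f x = f x' → g x ≠ g x' → 2 * δ < hammingDist (g x) (g x') := by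
  have hball : ∀ y w, hammingDist (g y) w = hammingNorm (-g y + w) := fun _ _ =>
    hammingDist_eq_hammingNorm _ _
  constructor
  · rintro ⟨D, hD⟩ x x' hf hg
    by_contra! hle
    obtain ⟨w, hxw, hwx'⟩ :=
      exists_hammingDist_le_of_hammingDist_le_add (hle.trans (two_mul δ).le)
    have hdec : ∀ y, hammingDist (g y) w ≤ δ → D (f y) w = g y := fun y hy => by
      simpa using hD y (-g y + w) (hball y w ▸ hy)
    exact hg ((hdec x hxw).symm.trans (hf ▸ hdec x' (hammingDist_comm w _ ▸ hwx')))
  · intro hsep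
    classical
    refine ⟨fun y w => if h : ∃ x, f x = y ∧ hammingDist (g x) w ≤ δ then g h.choose else 0, ?_⟩
    intro x ε hε
    have hxε : hammingDist (g x) (g x + ε) ≤ δ := by rwa [hball, neg_add_cancel_left]
    have hex : ∃ x', f x' = f x ∧ hammingDist (g x') (g x + ε) ≤ δ := ⟨x, rfl, hxε⟩
    obtain ⟨hf, hd⟩ := hex.choose_spec
    simp only [dif_pos hex]
    by_contra hne
    have hfar := hsep _ _ hf hne
    have htri := hammingDist_triangle (g hex.choose) (g x + ε) (g x)
    rw [hammingDist_comm (g x + ε)] at htri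
    omega

lemma hammingNorm_restrict {ι F : Type*} [Zero F] [DecidableEq F] (S : Finset ι) (z : ι → F) :
    hammingNorm (fun j : S => z j) = wtOn S z := by
  rw [hammingNorm, univ_eq_attach, filter_attach (fun j => z j ≠ 0), card_map, card_attach,
    wtOn]

lemma hammingDist_restrict {ι F : Type*} [AddGroup F] [DecidableEq F] (S : Finset ι)
    (x x' : ι → F) : hammingDist (fun j : S => x j) (fun j => x' j) = wtOn S (x - x') := by
  rw [← hammingNorm_restrict]
  simp only [hammingDist, hammingNorm, Pi.sub_apply, sub_ne_zero]

lemma validEncoder_iff {κ ι F : Type*} [Fintype ι] [Field F] [DecidableEq F] {N : ℕ}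
    (X : κ → Finset ι) (δ : ℕ) (L : Matrix ι (Fin N) F) :
    ValidEncoder X δ L ↔ ∀ i, ∀ x x' : ι → F, x ᵥ* L = x' ᵥ* L →
      (fun j : X i => x j) ≠ (fun j : X i => x' j) →
        2 * δ < hammingDist (fun j : X i => x j) (fun j : X i => x' j) := by
  constructor
  · intro hL i x x' hxL hne
    by_contra! hle
    rw [← hammingDist_pos, hammingDist_restrict] at hne
    rw [hammingDist_restrict] at hle
    exact hL (x - x') ⟨i, hne, hle⟩ (by rw [sub_vecMul, hxL, sub_self])
  · rintro h z ⟨i, hpos, hle⟩ hz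
    have hne : (fun j : X i => z j) ≠ (fun j : X i => (0 : ι → F) j) := by
      rwa [← hammingDist_pos, hammingDist_restrict, sub_zero]
    have hfar := h i z 0 (by rw [hz, zero_vecMul]) hne
    rw [hammingDist_restrict, sub_zero] at hfar
    omega

theorem stmt0 {F : Type*} {m n N : ℕ} [Field F] [DecidableEq F]
    (X : Fin m → Finset (Fin n)) (δ : ℕ) (L : Matrix (Fin n) (Fin N) F) :
    (∀ i : Fin m, ∃ D : (Fin N → F) → ({j // j ∈ X i} → F) → ({j // j ∈ X i} → F),
        ∀ (x : Fin n → F) (ε : {j // j ∈ X i} → F), wt ε ≤ δ →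
          D (Matrix.vecMul x L) (fun j => x j.1 + ε j) = fun j => x j.1) ↔
      ValidEncoder X δ L := by
  rw [validEncoder_iff]
  -- definitionally, `wt = hammingNorm` and `fun j => x j.1 + ε j` is a sum of functions
  exact forall_congr' fun i => exists_decoder_iff (fun x => x ᵥ* L) (fun x (j : X i) => x j) δ
end

section
/- A matrix L ∈ F_q^{n×N} is a valid encoder matrix for the BNSI problem (m,n,X,δ) if and only if for every i ∈ [m], no non-zero linear combination of 2δ or fewer rows of L_{X_i} belongs to the row span of L_{Y_i}, where Y_i = [n] \ X_i. -/
open Matrix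

/-! Write `z = c - y` with `c` supported on `X i` and `y` supported off it. Then `z L = 0` says
exactly that `c L = y L` lies in the span of the rows of `L` outside `X i`, and
`wt(z_{X i}) = wt c`; conversely every such `y` arises from `z = c - y`. -/

section

variable {ι R : Type*}

lemma wtOn_congr [Zero R] [DecidableEq R] {S : Finset ι} {z z' : ι → R}
    (h : ∀ j ∈ S, z j = z' j) : wtOn S z = wtOn S z' :=
  congrArg Finset.card <| Finset.filter_congr fun j hj => by rw [h j hj]

lemma wt_eq_wtOn [Fintype ι] [Zero R] [DecidableEq R] {S : Finset ι} {c : ι → R}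
    (hc : ∀ j, c j ≠ 0 → j ∈ S) : wt c = wtOn S c := by
  unfold wt wtOn
  congr 1
  ext j
  simpa using hc j

lemma wt_pos_iff [Fintype ι] [Zero R] [DecidableEq R] {c : ι → R} : 0 < wt c ↔ c ≠ 0 := by
  simp [wt, Finset.card_pos, Finset.filter_nonempty_iff, Function.ne_iff]

lemma mem_span_rows_compl_iff {κ : Type*} [Fintype ι] [Semiring R] [DecidableEq ι] (S : Finset ι)
    (L : Matrix ι κ R) (v : κ → R) :
    v ∈ Submodule.span R (Set.range fun j : {j // j ∉ S} => L j.1) ↔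
      ∃ y : ι → R, (∀ j ∈ S, y j = 0) ∧ y ᵥ* L = v := by
  rw [Submodule.mem_span_range_iff_exists_fun]
  constructor
  · rintro ⟨f, rfl⟩
    refine ⟨fun j => if h : j ∈ S then 0 else f ⟨j, h⟩, fun j hj => dif_pos hj, ?_⟩
    rw [vecMul_eq_sum, ← Fintype.sum_subtype_add_sum_subtype (· ∈ S)]
    simp only [Subtype.prop, dite_true, zero_smul, Finset.sum_const_zero, zero_add]
    exact Finset.sum_congr rfl fun j _ => by simp [j.2]
  · rintro ⟨y, hyS, rfl⟩
    refine ⟨fun j => y j, ?_⟩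
    rw [vecMul_eq_sum, ← Fintype.sum_subtype_add_sum_subtype (· ∈ S)]
    simp [hyS]

lemma forall_vecMul_ne_zero_iff_notMem_span_rows_compl {κ : Type*} [Fintype ι] [Ring R]
    [DecidableEq R] [DecidableEq ι] (S : Finset ι) (k : ℕ) (L : Matrix ι κ R) :
    (∀ z : ι → R, 1 ≤ wtOn S z → wtOn S z ≤ k → z ᵥ* L ≠ 0) ↔
      ∀ c : ι → R, (∀ j, c j ≠ 0 → j ∈ S) → c ≠ 0 → wt c ≤ k →
        c ᵥ* L ∉ Submodule.span R (Set.range fun j : {j // j ∉ S} => L j.1) := by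
  simp only [mem_span_rows_compl_iff]
  constructor
  · rintro h c hcS hc hck ⟨y, hyS, hy⟩
    have hwt : wtOn S (c - y) = wt c :=
      (wtOn_congr fun j hj => by simp [hyS j hj]).trans (wt_eq_wtOn hcS).symm
    refine h (c - y) (hwt ▸ wt_pos_iff.2 hc) (hwt ▸ hck) ?_
    rw [sub_vecMul, hy, sub_self]
  · intro h z hz hzk hzL
    set c : ι → R := fun j => if j ∈ S then z j else 0
    have hcS : ∀ j, c j ≠ 0 → j ∈ S := fun j hj => by
      by_contra hj'
      simp [c, hj'] at hj
    have hwt : wt c = wtOn S z := (wt_eq_wtOn hcS).trans (wtOn_congr fun j hj => by simp [c, hj])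
    refine h c hcS (wt_pos_iff.1 (hwt ▸ hz)) (hwt ▸ hzk) ⟨c - z, fun j hj => by simp [c, hj], ?_⟩
    rw [sub_vecMul, hzL, sub_zero]

end

theorem stmt1 {F : Type*} {m n N : ℕ} [Field F] [DecidableEq F]
    (X : Fin m → Finset (Fin n)) (δ : ℕ) (L : Matrix (Fin n) (Fin N) F) :
    ValidEncoder X δ L ↔
      ∀ i : Fin m, ∀ c : Fin n → F, (∀ j, c j ≠ 0 → j ∈ X i) → c ≠ 0 → wt c ≤ 2 * δ →
        Matrix.vecMul c L ∉
          Submodule.span F (Set.range fun j : {j // j ∉ X i} => L j.1) := by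
  simp only [ValidEncoder, forall_exists_index, and_imp]
  rw [forall_comm]
  exact forall_congr' fun i => forall_vecMul_ne_zero_iff_notMem_span_rows_compl (X i) (2 * δ) L
end

section
/- Let L be a valid encoder matrix for the BNSI problem (m,n,X,δ) and suppose |X_i| ≤ 2δ for some i. Then rank(L_{X_i}) = |X_i|, rowspan(L_{X_i}) ∩ rowspan(L_{Y_i}) = {0}, and rank(L) = |X_i| + rank(L_{Y_i}), where Y_i = [n] \ X_i. -/
open Matrix

/-! Because `|X i| ≤ 2δ`, validity of `L` says exactly that every linear relation among the rows
of `L` has all its coefficients on `X i` equal to zero. So the rows indexed by `X i` are linearly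
independent and their span meets the span of the remaining rows only in `0`; the rank formula is
the dimension count of this direct sum. -/

open Module Submodule Finsupp

section

variable {R K V ι : Type*}

theorem linearIndepOn_of_ker_le_supported_compl [Ring R] [AddCommGroup V] [Module R V]
    {v : ι → V} {s : Set ι}
    (h : LinearMap.ker (linearCombination R v) ≤ supported R R sᶜ) :
    LinearIndepOn R v s := by
  refine linearIndepOn_iff.2 fun l hls hl => Finsupp.ext fun j => ?_
  by_cases hj : j ∈ s
  · exact (mem_supported' R l).1 (h hl) j (not_not.2 hj)
  · exact (mem_supported' R l).1 hls j hj

theorem disjoint_span_image_of_ker_le_supported_compl [Ring R] [AddCommGroup V] [Module R V]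
    {v : ι → V} {s : Set ι}
    (h : LinearMap.ker (linearCombination R v) ≤ supported R R sᶜ) :
    Disjoint (span R (v '' s)) (span R (v '' sᶜ)) := by
  rw [disjoint_def]
  rintro _ hx hx'
  obtain ⟨a, has, rfl⟩ := (mem_span_image_iff_linearCombination R).1 hx
  obtain ⟨b, hbs, hab⟩ := (mem_span_image_iff_linearCombination R).1 hx'
  suffices a = 0 by simp [this]
  ext j
  by_cases hj : j ∈ s
  · have hdiff : a - b ∈ LinearMap.ker (linearCombination R v) := by
      rw [LinearMap.mem_ker, map_sub, hab, sub_self]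
    have hb : b j = 0 := (mem_supported' R b).1 hbs j (not_not.2 hj)
    simpa [hb] using (mem_supported' R _).1 (h hdiff) j (not_not.2 hj)
  · exact (mem_supported' R a).1 has j hj

theorem finrank_span_range_eq_add_of_disjoint [DivisionRing K] [AddCommGroup V] [Module K V]
    [Finite ι] {v : ι → V} {s : Set ι}
    (h : Disjoint (span K (v '' s)) (span K (v '' sᶜ))) :
    finrank K (span K (Set.range v)) =
      finrank K (span K (v '' s)) + finrank K (span K (v '' sᶜ)) := by
  have := FiniteDimensional.span_of_finite K (s.toFinite.image v)
  have := FiniteDimensional.span_of_finite K (sᶜ.toFinite.image v)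
  rw [← Set.image_univ, ← Set.union_compl_self s, Set.image_union, span_union,
    ← finrank_sup_add_finrank_inf_eq, h.eq_bot, finrank_bot, add_zero]

end

theorem ValidEncoder.ker_le_supported_compl {κ ι F : Type*} [Fintype ι] [Field F]
    [DecidableEq F] {N : ℕ} {X : κ → Finset ι} {δ : ℕ} {L : Matrix ι (Fin N) F}
    (hL : ValidEncoder X δ L) {i : κ} (hXi : (X i).card ≤ 2 * δ) :
    LinearMap.ker (linearCombination F fun j => L j) ≤ supported F F (↑(X i))ᶜ := by
  intro l hl
  rw [mem_supported']
  intro j hj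
  by_contra hlj
  refine hL l ⟨i, Finset.card_pos.2 ⟨j, ?_⟩, (Finset.card_filter_le _ _).trans hXi⟩ ?_
  · exact Finset.mem_filter.2 ⟨by simpa using hj, hlj⟩
  · have hvec : Matrix.vecMul l L = linearCombination F (fun j => L j) l := by
      ext k
      simp [Matrix.vecMul, dotProduct, linearCombination_apply, Finsupp.sum_fintype]
    exact hvec.trans hl

theorem stmt3 {F : Type*} {m n N : ℕ} [Field F] [DecidableEq F]
    (X : Fin m → Finset (Fin n)) (δ : ℕ) (L : Matrix (Fin n) (Fin N) F)
    (hL : ValidEncoder X δ L) (i : Fin m) (hXi : (X i).card ≤ 2 * δ) :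
    Module.finrank F
        (Submodule.span F (Set.range fun j : {j // j ∈ X i} => L j.1)) = (X i).card ∧
    Submodule.span F (Set.range fun j : {j // j ∈ X i} => L j.1) ⊓
        Submodule.span F (Set.range fun j : {j // j ∉ X i} => L j.1) = ⊥ ∧
    Module.finrank F (Submodule.span F (Set.range fun j : Fin n => L j)) =
      (X i).card +
        Module.finrank F
          (Submodule.span F (Set.range fun j : {j // j ∉ X i} => L j.1)) := by
  have hker := hL.ker_le_supported_compl hXi
  have hli : LinearIndependent F fun j : {j // j ∈ X i} => L j.1 :=
    linearIndepOn_of_ker_le_supported_compl hker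
  have hdisj := disjoint_span_image_of_ker_le_supported_compl hker
  have hsum := finrank_span_range_eq_add_of_disjoint hdisj
  rw [Set.image_eq_range, Set.image_eq_range] at hdisj hsum
  have hrankX : finrank F (span F (Set.range fun j : {j // j ∈ X i} => L j.1)) = (X i).card :=
    (finrank_span_eq_card hli).trans (Fintype.card_coe _)
  refine ⟨hrankX, hdisj.eq_bot, ?_⟩
  rw [← hrankX]
  exact hsum
end

section
/- Let L be a valid encoder matrix for the BNSI problem (m,n,X,δ) and fix i ∈ [m]. Let H_i be a parity check matrix of the code rowspan(L_{Y_i}) (i.e., H_i L_{Y_i}^T = 0 and the null space of H_i under right-multiplication by transposes equals rowspan(L_{Y_i})), and set A_i = H_i L_{X_i}^T. Then for any two distinct vectors ε, ε' ∈ F_q^{|X_i|} each of Hamming weight at most δ, we have A_i ε^T ≠ A_i ε'^T. -/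
open Matrix

/-! If `A ε = A ε'`, then `(ε - ε') L_X` lies in the row space of `L_Y`. Extending `ε - ε'` by
the negated coefficients on `Y` gives a vector `z` with `z L = 0` whose restriction to `X` is
non-zero of weight at most `2δ`, which validity of `L` forbids. -/

theorem wt_eq_hammingNorm {ι F : Type*} [Fintype ι] [Zero F] [DecidableEq F] (z : ι → F) :
    wt z = hammingNorm z :=
  rfl

theorem wt_sub_le {ι F : Type*} [Fintype ι] [AddGroup F] [DecidableEq F] (a b : ι → F) :
    wt (a - b) ≤ wt a + wt b := by
  calc wt (a - b) = hammingDist a b := by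
        simp only [wt, hammingDist, Pi.sub_apply, ne_eq, sub_eq_zero]
    _ ≤ hammingDist a 0 + hammingDist 0 b := hammingDist_triangle a 0 b
    _ = wt a + wt b := by
        rw [hammingDist_zero_right, hammingDist_zero_left, wt_eq_hammingNorm, wt_eq_hammingNorm]

theorem wtOn_eq_wt_restrict {ι F : Type*} [Zero F] [DecidableEq F] (S : Finset ι)
    (z : ι → F) : wtOn S z = wt fun j : S => z j := by
  rw [wtOn, wt, Finset.card_filter, Finset.card_filter, ← Finset.sum_coe_sort]

theorem ValidEncoder.sum_smul_notMem_span {κ ι F : Type*} [Fintype ι] [Field F]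
    [DecidableEq F] {N : ℕ} {X : κ → Finset ι} {δ : ℕ} {L : Matrix ι (Fin N) F}
    (hL : ValidEncoder X δ L) (i : κ) {d : X i → F} (hd : d ≠ 0) (hwt : wt d ≤ 2 * δ) :
    ∑ j, d j • L j ∉ Submodule.span F (Set.range fun j : {j // j ∉ X i} => L j) := by
  classical
  intro hmem
  obtain ⟨c, hc⟩ := (Submodule.mem_span_range_iff_exists_fun F).mp hmem
  let z : ι → F := fun j => if h : j ∈ X i then d ⟨j, h⟩ else -c ⟨j, h⟩
  have hz_on : ∀ j : X i, z j = d j := fun j => dif_pos j.2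
  have hz_off : ∀ j : {j // j ∉ X i}, z j = -c j := fun j => dif_neg j.2
  have hz_vecMul : vecMul z L = 0 := by
    rw [vecMul_eq_sum, ← Fintype.sum_subtype_add_sum_subtype (· ∈ X i)]
    simp only [hz_on, hz_off, neg_smul, Finset.sum_neg_distrib, hc]
    -- the two sums over `X i` carry different `Fintype` instances
    convert add_neg_cancel (∑ j, d j • L j)
  have hz_restrict : (fun j : X i => z j) = d := funext hz_on
  refine hL z ⟨i, ?_, ?_⟩ hz_vecMul <;> rw [wtOn_eq_wt_restrict, hz_restrict]
  · rw [wt_eq_hammingNorm]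
    exact hammingNorm_pos_iff.mpr hd
  · exact hwt

theorem stmt4 {F : Type*} {m n N r : ℕ} [Field F] [DecidableEq F]
    (X : Fin m → Finset (Fin n)) (δ : ℕ) (L : Matrix (Fin n) (Fin N) F)
    (hL : ValidEncoder X δ L) (i : Fin m) (H : Matrix (Fin r) (Fin N) F)
    (hH : ∀ v : Fin N → F, Matrix.mulVec H v = 0 ↔
      v ∈ Submodule.span F (Set.range fun j : {j // j ∉ X i} => L j.1))
    (ε ε' : {j // j ∈ X i} → F) (hne : ε ≠ ε') (hwt : wt ε ≤ δ) (hwt' : wt ε' ≤ δ) :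
    Matrix.mulVec H (fun k => ∑ j, ε j * L j.1 k) ≠
      Matrix.mulVec H (fun k => ∑ j, ε' j * L j.1 k) := by
  intro heq
  have hsum : ∀ e : X i → F, (fun k => ∑ j, e j * L j.1 k) = ∑ j, e j • L j.1 := fun e => by
    ext k; simp only [Finset.sum_apply, Pi.smul_apply, smul_eq_mul]
  rw [hsum, hsum, ← sub_eq_zero, ← mulVec_sub, hH, ← Finset.sum_sub_distrib] at heq
  simp_rw [← sub_smul] at heq
  exact hL.sum_smul_notMem_span i (sub_ne_zero.mpr hne) ((wt_sub_le ε ε').trans (by omega)) heq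
end

section
/- Let L be a valid encoder matrix for the BNSI problem (m,n,X,δ). Fix i ∈ [m] and consider the derived BNSI problem obtained by removing the symbols indexed by X_i: it has receivers u_j for j ≠ i with demand sets X'_j = X_j \ X_i, over the message index set [n] \ X_i. Then the submatrix L_{Y_i} (rows of L indexed by Y_i = [n]\X_i) is a valid encoder matrix for the derived BNSI problem with the same error bound δ. -/
open Matrix

/-! Extending a vector on the surviving coordinates by zero changes neither its weight on any
demand set nor its product with `L`, so a violation of validity for the derived problem would be
one for the original problem. -/

section ExtendByZero

variable {ι F : Type*} {p : ι → Prop} (z : Subtype p → F)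

theorem extend_subtype_val_eq_zero [Zero F] {k : ι} (hk : ¬p k) :
    Function.extend Subtype.val z 0 k = 0 :=
  Function.extend_apply' _ _ _ fun ⟨a, ha⟩ => hk (ha ▸ a.2)

theorem wtOn_subtype [Zero F] [DecidablePred p] [DecidableEq F] (S : Finset ι) :
    wtOn (S.subtype p) z = wtOn S (Function.extend Subtype.val z 0) := by
  have hsupp : S.filter (fun j => Function.extend Subtype.val z 0 j ≠ 0) =
      (S.filter p).filter (fun j => Function.extend Subtype.val z 0 j ≠ 0) := by
    rw [Finset.filter_filter]
    refine Finset.filter_congr fun k _ => ⟨fun hk => ⟨?_, hk⟩, And.right⟩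
    exact not_not.1 (mt (extend_subtype_val_eq_zero z) hk)
  rw [wtOn, wtOn, hsupp, ← Finset.subtype_map p (s := S), Finset.filter_map, Finset.card_map]
  simp only [Function.comp_def, Function.Embedding.subtype_apply,
    Subtype.val_injective.extend_apply]

theorem vecMul_extend_subtype_val [Fintype ι] [NonUnitalNonAssocSemiring F] [DecidablePred p]
    {o : Type*} (L : Matrix ι o F) :
    vecMul (Function.extend Subtype.val z 0) L = vecMul z (L.submatrix Subtype.val id) := by
  ext c
  rw [vecMul, dotProduct, ← Fintype.sum_subtype_add_sum_subtype p,
    Fintype.sum_eq_zero (fun k : {k // ¬p k} => _ * L k c)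
      fun k => by rw [extend_subtype_val_eq_zero z k.2, zero_mul], add_zero]
  simp only [Subtype.val_injective.extend_apply]
  rfl

end ExtendByZero

theorem ValidEncoder.restrict {κ κ' ι F : Type*} [Fintype ι] [Field F] [DecidableEq F] {N : ℕ}
    {X : κ → Finset ι} {δ : ℕ} {L : Matrix ι (Fin N) F} (hL : ValidEncoder X δ L)
    (f : κ' → κ) (p : ι → Prop) [DecidablePred p] :
    ValidEncoder (fun j => (X (f j)).subtype p) δ (L.submatrix Subtype.val id) := by
  rintro z ⟨j, hj⟩
  rw [← vecMul_extend_subtype_val]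
  exact hL _ ⟨f j, by simpa only [wtOn_subtype] using hj⟩

theorem stmt5 {F : Type*} {m n N : ℕ} [Field F] [DecidableEq F]
    (X : Fin m → Finset (Fin n)) (δ : ℕ) (L : Matrix (Fin n) (Fin N) F)
    (hL : ValidEncoder X δ L) (i : Fin m) :
    ValidEncoder (fun j : {j : Fin m // j ≠ i} => (X j.1).subtype fun k => k ∉ X i) δ
      (fun (j : {k : Fin n // k ∉ X i}) (k : Fin N) => L j.1 k) :=
  hL.restrict Subtype.val _
end

section
/- Suppose an (m,n,X,δ) BNSI problem satisfies |X_i| ≥ 2δ+1 for all i ∈ [m]. Let L ∈ F_q^{n×(n-1)} be the matrix whose first n−1 rows form the identity I_{n-1} and whose last row is the all-ones vector of length n−1. Then L is a valid encoder matrix for this BNSI problem; in particular the optimal linear codelength satisfies N_{q,opt} ≤ n−1. -/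
open Matrix

def identityOnesMatrix (F : Type*) [Zero F] [One F] (n : ℕ) : Matrix (Fin n) (Fin (n - 1)) F :=
  fun j k => if (j : ℕ) = (k : ℕ) then 1 else if (j : ℕ) = n - 1 then 1 else 0

section identityOnesMatrix

variable {F : Type*}

theorem vecMul_identityOnesMatrix_succ_apply [NonAssocSemiring F] {n : ℕ} (z : Fin (n + 1) → F)
    (k : Fin n) :
    vecMul z (identityOnesMatrix F (n + 1)) k = z k.castSucc + z (Fin.last n) := by
  have hk : n ≠ k := k.isLt.ne'
  simp only [vecMul, dotProduct, Fin.sum_univ_castSucc, identityOnesMatrix, Fin.val_castSucc,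
    Fin.val_last, Fin.val_inj, hk, add_tsub_cancel_right, if_true, if_false, mul_one]
  congr 1
  rw [Finset.sum_eq_single k (fun i _ hik => by simp [hik, i.isLt.ne]) (by simp)]
  simp

/-- A vector in the left kernel is constant on the first `n-1` coordinates and minus that
constant on the last. -/
theorem eq_zero_or_forall_ne_zero_of_vecMul_identityOnesMatrix_eq_zero [Ring F] {n : ℕ}
    {z : Fin n → F} (hz : vecMul z (identityOnesMatrix F n) = 0) :
    z = 0 ∨ ∀ j, z j ≠ 0 := by
  cases n with
  | zero => exact Or.inl (Subsingleton.elim _ _)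
  | succ n =>
    have hcast (k : Fin n) : z k.castSucc = -z (Fin.last n) := by
      rw [eq_neg_iff_add_eq_zero, ← vecMul_identityOnesMatrix_succ_apply, hz, Pi.zero_apply]
    by_cases hlast : z (Fin.last n) = 0
    · left
      funext j
      induction j using Fin.lastCases with
      | last => exact hlast
      | cast k => simp [hcast, hlast]
    · right
      intro j
      induction j using Fin.lastCases with
      | last => exact hlast
      | cast k => simpa [hcast] using hlast

end identityOnesMatrix

theorem wtOn_zero {ι F : Type*} [Zero F] [DecidableEq F] (S : Finset ι) :
    wtOn S (0 : ι → F) = 0 := by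
  simp [wtOn]

theorem wtOn_eq_card_of_forall_ne_zero {ι F : Type*} [Zero F] [DecidableEq F] (S : Finset ι)
    {z : ι → F} (hz : ∀ j, z j ≠ 0) : wtOn S z = S.card := by
  simp [wtOn, hz]

theorem validEncoder_of_vecMul_eq_zero {κ ι F : Type*} [Fintype ι] [Field F] [DecidableEq F]
    {N : ℕ} (X : κ → Finset ι) (δ : ℕ) (hX : ∀ i, 2 * δ + 1 ≤ (X i).card)
    {L : Matrix ι (Fin N) F} (hL : ∀ z, vecMul z L = 0 → z = 0 ∨ ∀ j, z j ≠ 0) :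
    ValidEncoder X δ L := by
  rintro z ⟨i, hpos, hle⟩ hzL
  rcases hL z hzL with rfl | hfull
  · rw [wtOn_zero] at hpos
    omega
  · rw [wtOn_eq_card_of_forall_ne_zero _ hfull] at hle
    have := hX i
    omega

theorem Nopt_le_of_validEncoder {F κ ι : Type*} [Field F] [DecidableEq F] [Fintype ι]
    {X : κ → Finset ι} {δ N : ℕ} {L : Matrix ι (Fin N) F} (hL : ValidEncoder X δ L) :
    Nopt F X δ ≤ N :=
  Nat.sInf_le ⟨L, hL⟩

theorem stmt6 {F : Type*} {m n : ℕ} [Field F] [DecidableEq F]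
    (X : Fin m → Finset (Fin n)) (δ : ℕ) (hX : ∀ i, 2 * δ + 1 ≤ (X i).card) :
    ValidEncoder X δ (fun (j : Fin n) (k : Fin (n - 1)) =>
        if (j : ℕ) = (k : ℕ) then (1 : F) else if (j : ℕ) = n - 1 then 1 else 0) ∧
      Nopt F X δ ≤ n - 1 := by
  have hvalid : ValidEncoder X δ (identityOnesMatrix F n) :=
    validEncoder_of_vecMul_eq_zero X δ hX
      fun _ => eq_zero_or_forall_ne_zero_of_vecMul_identityOnesMatrix_eq_zero
  exact ⟨hvalid, Nopt_le_of_validEncoder hvalid⟩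
end

section
/- Let B be the bipartite graph of an (m,n,X,δ) BNSI problem and define Φ(B) as the collection of non-empty subsets C ⊆ [n] such that for every i ∈ [m], |X_i ∩ C| is either 0 or at least 2δ+1. If Φ(B) is empty, then every valid encoder matrix L ∈ F_q^{n×N} for the problem has rank(L) = n; consequently the optimal linear codelength equals n. -/
/-!
If `z L = 0` with `z ≠ 0`, the support `C` of `z` is a non-empty set outside `Φ(B) = ∅`, so some
demand set meets `C` in between `1` and `2δ` coordinates; that contradicts validity of `L`.
Hence the rows of every valid `L` are independent and `rank L = n`, while the identity matrix
shows `N_opt ≤ n`.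
-/

open Matrix

lemma wtOn_eq_card_inter_support {ι F : Type*} [Fintype ι] [DecidableEq ι] [Zero F]
    [DecidableEq F] (S : Finset ι) (z : ι → F) :
    wtOn S z = (S ∩ Finset.univ.filter fun j => z j ≠ 0).card := by
  rw [wtOn, Finset.inter_filter, Finset.inter_univ]

lemma exists_wtOn_mem_Icc_of_phi_eq_empty {F : Type*} [Zero F] [DecidableEq F] {m n : ℕ}
    {X : Fin m → Finset (Fin n)} {δ : ℕ} (hPhi : Phi X δ = ∅) {z : Fin n → F} (hz : z ≠ 0) :
    ∃ i, 1 ≤ wtOn (X i) z ∧ wtOn (X i) z ≤ 2 * δ := by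
  set C := Finset.univ.filter fun j => z j ≠ 0
  have hC : C.Nonempty := by
    obtain ⟨j, hj⟩ := Function.ne_iff.mp hz
    exact ⟨j, by simpa [C] using hj⟩
  have hCPhi : C ∉ Phi X δ := hPhi ▸ Set.notMem_empty C
  simp only [Phi, Set.mem_ofPred_eq, not_and, not_forall, not_or, not_le] at hCPhi
  obtain ⟨i, hpos, hlt⟩ := hCPhi hC
  have hwt : wtOn (X i) z = (X i ∩ C).card := wtOn_eq_card_inter_support _ _
  exact ⟨i, by omega, by omega⟩

lemma ValidEncoder.vecMul_injective {κ ι F : Type*} [Fintype ι] [Field F] [DecidableEq F]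
    {N : ℕ} {X : κ → Finset ι} {δ : ℕ} {L : Matrix ι (Fin N) F} (hL : ValidEncoder X δ L)
    (hdetect : ∀ z : ι → F, z ≠ 0 → ∃ i, 1 ≤ wtOn (X i) z ∧ wtOn (X i) z ≤ 2 * δ) :
    Function.Injective L.vecMul := by
  rw [← coe_vecMulLinear, injective_iff_map_eq_zero]
  intro z hz
  by_contra h
  exact hL z (hdetect z h) hz

lemma ValidEncoder.rank_eq_card {κ ι F : Type*} [Fintype ι] [Field F] [DecidableEq F]
    {N : ℕ} {X : κ → Finset ι} {δ : ℕ} {L : Matrix ι (Fin N) F} (hL : ValidEncoder X δ L)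
    (hdetect : ∀ z : ι → F, z ≠ 0 → ∃ i, 1 ≤ wtOn (X i) z ∧ wtOn (X i) z ≤ 2 * δ) :
    L.rank = Fintype.card ι :=
  (vecMul_injective_iff.mp (hL.vecMul_injective hdetect)).rank_matrix

lemma validEncoder_one {κ F : Type*} [Field F] [DecidableEq F] {n : ℕ}
    (X : κ → Finset (Fin n)) (δ : ℕ) : ValidEncoder X δ (1 : Matrix (Fin n) (Fin n) F) := by
  rintro z ⟨i, hpos, -⟩ hz
  rw [vecMul_one] at hz
  obtain ⟨j, hj⟩ := Finset.card_pos.mp hpos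
  simp [hz] at hj

lemma nopt_le {κ : Type*} (F : Type*) [Field F] [DecidableEq F] {n : ℕ}
    (X : κ → Finset (Fin n)) (δ : ℕ) : Nopt F X δ ≤ n :=
  Nat.sInf_le ⟨1, validEncoder_one X δ⟩

lemma exists_validEncoder_nopt {κ : Type*} (F : Type*) [Field F] [DecidableEq F] {n : ℕ}
    (X : κ → Finset (Fin n)) (δ : ℕ) :
    ∃ L : Matrix (Fin n) (Fin (Nopt F X δ)) F, ValidEncoder X δ L :=
  Nat.sInf_mem (s := {N | ∃ L : Matrix (Fin n) (Fin N) F, ValidEncoder X δ L})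
    ⟨n, 1, validEncoder_one X δ⟩

theorem stmt7_general {F : Type*} {m n : ℕ} [Field F] [DecidableEq F]
    (X : Fin m → Finset (Fin n)) (δ : ℕ)
    (hPhi : Phi X δ = ∅) :
    (∀ {N : ℕ} (L : Matrix (Fin n) (Fin N) F), ValidEncoder X δ L → L.rank = n) ∧
      Nopt F X δ = n := by
  have hrank {N : ℕ} (L : Matrix (Fin n) (Fin N) F) (hL : ValidEncoder X δ L) : L.rank = n := by
    simpa using hL.rank_eq_card fun z hz => exists_wtOn_mem_Icc_of_phi_eq_empty hPhi hz
  refine ⟨hrank, le_antisymm (nopt_le F X δ) ?_⟩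
  obtain ⟨L, hL⟩ := exists_validEncoder_nopt F X δ
  exact (hrank L hL).symm.trans_le L.rank_le_width

theorem stmt7 {F : Type*} {m n : ℕ} [Field F] [DecidableEq F]
    (X : Fin m → Finset (Fin n)) (δ : ℕ) (hX : ∀ i, (X i).Nonempty)
    (hPhi : Phi X δ = ∅) :
    (∀ {N : ℕ} (L : Matrix (Fin n) (Fin N) F), ValidEncoder X δ L → L.rank = n) ∧
      Nopt F X δ = n :=
  stmt7_general X δ hPhi
end

section
/- Let B be the bipartite graph of an (m,n,X,δ) BNSI problem and Φ(B) the collection of non-empty C ⊆ [n] with |X_i ∩ C| ∉ {1,...,2δ} for all i ∈ [m]. If Φ(B) is non-empty, then there exists a valid linear encoder of codelength n−1; hence N_{q,opt} < n. -/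
/-! If `z ᵥ* L = 0` for the encoder built from `C ∈ Φ(B)` and `c₀ ∈ C`, then every coordinate of
`z` outside `C` vanishes and every coordinate in `C \ {c₀}` equals `-z c₀`. So the support of `z`
is `∅` or `C`, and the weight of `z` on each `X i` is `0` or `|X i ∩ C| ≥ 2δ + 1`. -/

open Matrix

/-- The paper's encoder for `C ∈ Φ(B)` with a chosen `c₀ ∈ C`: symbols outside `C` are sent
uncoded, and each `c ∈ C \ {c₀}` is sent as `x_c + x_{c₀}`. Column `k` belongs to the symbol
`c₀.succAbove k`. -/
def phiEncoder {F : Type*} [AddMonoidWithOne F] {n : ℕ} (C : Finset (Fin (n + 1)))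
    (c₀ : Fin (n + 1)) : Matrix (Fin (n + 1)) (Fin n) F :=
  Matrix.of fun j k =>
    (if j = c₀.succAbove k then 1 else 0) + (if j = c₀ ∧ c₀.succAbove k ∈ C then 1 else 0)

lemma vecMul_phiEncoder_apply {F : Type*} [NonAssocSemiring F] {n : ℕ}
    (C : Finset (Fin (n + 1))) (c₀ : Fin (n + 1)) (z : Fin (n + 1) → F) (k : Fin n) :
    vecMul z (phiEncoder C c₀) k =
      z (c₀.succAbove k) + if c₀.succAbove k ∈ C then z c₀ else 0 := by
  simp only [vecMul, dotProduct, phiEncoder, Matrix.of_apply, mul_add, mul_ite, mul_one,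
    mul_zero, Finset.sum_add_distrib, Finset.sum_ite_eq']
  by_cases hk : c₀.succAbove k ∈ C <;> simp [hk]

lemma eq_zero_or_support_eq_of_vecMul_phiEncoder_eq_zero {F : Type*} [Ring F] {n : ℕ}
    {C : Finset (Fin (n + 1))} {c₀ : Fin (n + 1)} (hc₀ : c₀ ∈ C) {z : Fin (n + 1) → F}
    (hz : vecMul z (phiEncoder C c₀) = 0) :
    (∀ j, z j = 0) ∨ ∀ j, z j ≠ 0 ↔ j ∈ C := by
  have hoff : ∀ j ≠ c₀, z j = -if j ∈ C then z c₀ else 0 := by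
    intro j hj
    obtain ⟨k, rfl⟩ := Fin.exists_succAbove_eq hj
    have hk := congrFun hz k
    rw [vecMul_phiEncoder_apply] at hk
    exact eq_neg_of_add_eq_zero_left hk
  by_cases hz₀ : z c₀ = 0
  · left
    intro j
    by_cases hj : j = c₀
    · rwa [hj]
    · simp [hoff j hj, hz₀]
  · right
    intro j
    by_cases hj : j = c₀
    · simp [hj, hz₀, hc₀]
    · by_cases hjC : j ∈ C <;> simp [hoff j hj, hz₀, hjC]

lemma wtOn_eq_card_inter {ι F : Type*} [DecidableEq ι] [Zero F] [DecidableEq F]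
    {S T : Finset ι} {z : ι → F} (hz : ∀ j, z j ≠ 0 ↔ j ∈ T) : wtOn S z = (S ∩ T).card := by
  rw [wtOn, Finset.filter_mem_eq_inter.symm]
  simp only [hz]

lemma validEncoder_phiEncoder {F : Type*} [Field F] [DecidableEq F] {m n : ℕ}
    {X : Fin m → Finset (Fin (n + 1))} {δ : ℕ} {C : Finset (Fin (n + 1))}
    (hC : C ∈ Phi X δ) {c₀ : Fin (n + 1)} (hc₀ : c₀ ∈ C) :
    ValidEncoder X δ (phiEncoder (F := F) C c₀) := by
  rintro z ⟨i, hpos, hle⟩ hz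
  rcases eq_zero_or_support_eq_of_vecMul_phiEncoder_eq_zero hc₀ hz with hzero | hsupp
  · have : wtOn (X i) z = 0 := by simp [wtOn, hzero]
    omega
  · rw [wtOn_eq_card_inter hsupp] at hpos hle
    rcases hC.2 i with h | h <;> omega

theorem stmt8 {F : Type*} {m n : ℕ} [Field F] [DecidableEq F]
    (X : Fin m → Finset (Fin n)) (δ : ℕ) (hPhi : (Phi X δ).Nonempty) :
    (∃ L : Matrix (Fin n) (Fin (n - 1)) F, ValidEncoder X δ L) ∧
      Nopt F X δ < n := by
  obtain ⟨C, hC⟩ := hPhi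
  obtain ⟨c₀, hc₀⟩ := hC.1
  cases n with
  | zero => exact c₀.elim0
  | succ n =>
    have hL := validEncoder_phiEncoder (F := F) hC hc₀
    exact ⟨⟨_, hL⟩, Nat.lt_succ_of_le (Nat.sInf_le ⟨_, hL⟩)⟩
end

section
/- Let H be the parity check matrix of a linear [n, k', d_min] code over F_q with d_min ≥ 2δ + max_{i∈[m]}(n − |X_i|) + 1. Then L = H^T is a valid encoder matrix for the (m,n,X,δ) BNSI problem. -/
open Matrix

theorem wt_eq_wtOn_add_wtOn_compl {ι F : Type*} [Fintype ι] [DecidableEq ι] [Zero F]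
    [DecidableEq F] (S : Finset ι) (z : ι → F) : wt z = wtOn S z + wtOn Sᶜ z := by
  rw [wt, wtOn, wtOn, ← Finset.card_union_of_disjoint
    (Finset.disjoint_filter_filter disjoint_compl_right), ← Finset.filter_union,
    Finset.union_compl]

theorem wtOn_le_card {ι F : Type*} [Zero F] [DecidableEq F] (S : Finset ι) (z : ι → F) :
    wtOn S z ≤ S.card :=
  Finset.card_filter_le _ _

theorem ne_zero_of_wtOn_pos {ι F : Type*} [Zero F] [DecidableEq F] {S : Finset ι}
    {z : ι → F} (h : 0 < wtOn S z) : z ≠ 0 := by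
  rintro rfl
  simp [wtOn] at h

theorem wtOn_compl_le {n : ℕ} {F : Type*} [Zero F] [DecidableEq F] (S : Finset (Fin n))
    (z : Fin n → F) : wtOn Sᶜ z ≤ n - S.card := by
  simpa [Finset.card_compl] using wtOn_le_card Sᶜ z

theorem stmt12 {F : Type*} {m n r : ℕ} [Field F] [DecidableEq F]
    (X : Fin m → Finset (Fin n)) (δ : ℕ) (d : ℕ) (H : Matrix (Fin r) (Fin n) F)
    (hH : ∀ c : Fin n → F, c ≠ 0 → wt c < d → Matrix.vecMul c Hᵀ ≠ 0)
    (hd : ∀ i, 2 * δ + (n - (X i).card) + 1 ≤ d) :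
    ValidEncoder X δ Hᵀ := by
  rintro z ⟨i, hpos, hle⟩
  have hwt : wt z < d := by
    have := wtOn_compl_le (X i) z
    have := hd i
    rw [wt_eq_wtOn_add_wtOn_compl (X i) z]
    omega
  exact hH z (ne_zero_of_wtOn_pos hpos) hwt
end

section
/- For an (m,n,X,δ) BNSI problem over F_q with q ≥ n, the optimal linear codelength satisfies N_{q,opt} ≤ n − min_{i∈[m]} max(|X_i| − 2δ, 0). -/
/-! Use as encoder the `n × (n - k)` Vandermonde matrix `(β j ^ t)` on `n` distinct field elements:
any `n - k` of its rows are linearly independent. A vector `z` with `1 ≤ wt(z_{X i}) ≤ 2δ` has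
total weight at most `2δ + n - |X i| ≤ n - k`, so `z ⬝ᵥ L = 0` would force `z = 0`. -/

open Matrix

lemma wt_le_wtOn_add_card_compl {ι F : Type*} [Fintype ι] [DecidableEq ι] [Zero F]
    [DecidableEq F] (S : Finset ι) (z : ι → F) :
    wt z ≤ wtOn S z + (Fintype.card ι - S.card) := by
  have hsub : Finset.univ.filter (fun j => z j ≠ 0) ⊆ S.filter (fun j => z j ≠ 0) ∪ Sᶜ := by
    intro j hj
    by_cases hjS : j ∈ S <;> simp_all
  calc wt z ≤ (S.filter (fun j => z j ≠ 0) ∪ Sᶜ).card := Finset.card_le_card hsub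
    _ ≤ wtOn S z + Sᶜ.card := Finset.card_union_le _ _
    _ = wtOn S z + (Fintype.card ι - S.card) := by rw [Finset.card_compl]

-- On the support of `z` (at most `N` points) the equations form an invertible Vandermonde system.
theorem eq_zero_of_wt_le_of_sum_mul_pow_eq_zero {ι R : Type*} [Fintype ι] [CommRing R]
    [IsDomain R] [DecidableEq R] {β : ι → R} (hβ : Function.Injective β) {z : ι → R} {N : ℕ}
    (hwt : wt z ≤ N) (h : ∀ t < N, ∑ j, z j * β j ^ t = 0) : z = 0 := by
  set S := Finset.univ.filter (fun j => z j ≠ 0)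
  let e : Fin S.card ≃ S := S.equivFin.symm
  have hsum : ∀ t : ℕ, ∑ a, z (e a) * β (e a) ^ t = ∑ j, z j * β j ^ t := fun t => by
    rw [e.sum_comp (fun j : S => z j * β j ^ t), Finset.sum_coe_sort S (fun j => z j * β j ^ t),
      Finset.sum_filter_of_ne]
    intro j _ hj hzj
    simp [hzj] at hj
  have hzS : (fun a => z (e a)) = 0 :=
    Matrix.eq_zero_of_forall_pow_sum_mul_pow_eq_zero (f := fun a => β (e a))
      (fun a b hab => e.injective (Subtype.ext (hβ hab)))
      (fun t => (hsum t).trans (h t (t.isLt.trans_le hwt)))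
  funext j
  by_contra hj
  have hjS : j ∈ S := by simpa [S] using hj
  exact hj (by simpa using congrFun hzS (e.symm ⟨j, hjS⟩))

-- The transposed parity-check matrix of a Reed–Solomon code, an MDS code of dimension `k`.
theorem validEncoder_vandermonde {κ ι F : Type*} [Fintype ι] [DecidableEq ι] [Field F]
    [DecidableEq F] (X : κ → Finset ι) (δ k : ℕ) (hk : ∀ i, k ≤ (X i).card - 2 * δ)
    {β : ι → F} (hβ : Function.Injective β) :
    ValidEncoder X δ (Matrix.of fun j (t : Fin (Fintype.card ι - k)) => β j ^ (t : ℕ)) := by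
  rintro z ⟨i, hpos, hle⟩ hzero
  have hXi : (X i).card ≤ Fintype.card ι := Finset.card_le_univ _
  have hwtOn : wtOn (X i) z ≤ (X i).card := Finset.card_filter_le _ _
  have hwt : wt z ≤ Fintype.card ι - k := by
    have := wt_le_wtOn_add_card_compl (X i) z
    have := hk i
    omega
  have hz : z = 0 := eq_zero_of_wt_le_of_sum_mul_pow_eq_zero hβ hwt fun t ht => by
    simpa [Matrix.vecMul, dotProduct] using congrFun hzero ⟨t, ht⟩
  simp [hz, wtOn] at hpos

theorem stmt13 {F : Type*} {m n : ℕ} [Field F] [DecidableEq F] [Fintype F]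
    (X : Fin m → Finset (Fin n)) (δ : ℕ) (hm : 0 < m) (hq : n ≤ Fintype.card F) :
    Nopt F X δ ≤
      n - Finset.univ.inf' (Finset.univ_nonempty_iff.mpr ⟨⟨0, hm⟩⟩)
        (fun i : Fin m => (X i).card - 2 * δ) := by
  obtain ⟨β⟩ : Nonempty (Fin n ↪ F) :=
    Function.Embedding.nonempty_of_card_le (by simpa using hq)
  have hk : ∀ i, Finset.univ.inf' (Finset.univ_nonempty_iff.mpr ⟨⟨0, hm⟩⟩)
      (fun i : Fin m => (X i).card - 2 * δ) ≤ (X i).card - 2 * δ :=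
    fun i => Finset.inf'_le _ (Finset.mem_univ i)
  have hN := Nat.sInf_le (s := {N | ∃ L : Matrix (Fin n) (Fin N) F, ValidEncoder X δ L})
    ⟨_, validEncoder_vandermonde X δ _ hk β.injective⟩
  simpa [Nopt] using hN
end

section
/- Let C_1,...,C_K be (not necessarily disjoint) elements of Φ(B) for an (m,n,X,δ) BNSI problem, yielding a valid coding scheme of length N = Σ_k |C_k| − K + |R| where R = [n] \ (C_1∪...∪C_K). Then there exist pairwise disjoint elements C'_1,...,C'_{K'} of Φ(B) with K' ≤ K such that the analogous scheme based on them has codelength N' ≤ N. -/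
open Matrix

/-! Keep, in index order, exactly those sets `C j` that are disjoint from every earlier one; they
are pairwise disjoint, and a disjoint family of `K'` non-empty sets has codelength `n - K'`.
Each discarded set shares an element with an earlier one, so it adds at most `|C j| - 1` new
elements to the union; hence `|⋃ C| + K ≤ ∑ |C j| + K'`, which is exactly `n - K' ≤ N`. -/

open Finset Function

section DisjointFromEarlier

variable {ι α : Type*} [LinearOrder ι] [DecidableEq α]

def disjointFromEarlier (C : ι → Finset α) (s : Finset ι) : Finset ι :=
  {j ∈ s | ∀ i ∈ s, i < j → Disjoint (C i) (C j)}

theorem pairwiseDisjoint_disjointFromEarlier (C : ι → Finset α) (s : Finset ι) :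
    (disjointFromEarlier C s : Set ι).PairwiseDisjoint C := by
  intro i hi j hj hij
  simp only [disjointFromEarlier, coe_filter, Set.mem_ofPred_eq] at hi hj
  rcases hij.lt_or_gt with h | h
  · exact hj.2 i hi.1 h
  · exact (hi.2 j hj.1 h).symm

theorem card_disjointFromEarlier_insert {C : ι → Finset α} {s : Finset ι} {a : ι}
    (ha : ∀ x ∈ s, x < a) :
    #(disjointFromEarlier C (insert a s)) =
      #(disjointFromEarlier C s) + if Disjoint (s.biUnion C) (C a) then 1 else 0 := by
  have has : a ∉ s := fun h => lt_irrefl a (ha a h)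
  have hs : {j ∈ s | ∀ i ∈ insert a s, i < j → Disjoint (C i) (C j)} =
      disjointFromEarlier C s :=
    filter_congr fun j hj => by simp [not_lt_of_gt (ha j hj)]
  have hnew : (∀ i ∈ insert a s, i < a → Disjoint (C i) (C a)) ↔
      Disjoint (s.biUnion C) (C a) := by
    simp only [forall_mem_insert, lt_irrefl, disjoint_biUnion_left]
    exact ⟨fun h i hi => h.2 i hi (ha i hi), fun h => ⟨fun h' => h'.elim, fun i hi _ => h i hi⟩⟩
  rw [disjointFromEarlier, filter_insert, hs]
  split_ifs with h₁ h₂ h₂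
  · exact card_insert_of_notMem fun h => has (filter_subset _ _ h)
  · exact absurd (hnew.mp h₁) h₂
  · exact absurd (hnew.mpr h₂) h₁
  · rfl

theorem card_biUnion_add_card_le (C : ι → Finset α) (s : Finset ι) :
    #(s.biUnion C) + #s ≤ ∑ j ∈ s, #(C j) + #(disjointFromEarlier C s) := by
  induction s using Finset.induction_on_max with
  | empty => simp [disjointFromEarlier]
  | insert a s ha ih =>
    have has : a ∉ s := fun h => lt_irrefl a (ha a h)
    have hunion := card_union_add_card_inter (C a) (s.biUnion C)
    rw [biUnion_insert, card_insert_of_notMem has, sum_insert has,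
      card_disjointFromEarlier_insert ha]
    split_ifs with h
    · omega
    · have : 0 < #(C a ∩ s.biUnion C) :=
        card_pos.mpr (not_disjoint_iff_nonempty_inter.mp fun h' => h h'.symm)
      omega

end DisjointFromEarlier

section Codelength

variable {ι α : Type*} [Fintype ι] [Fintype α] [DecidableEq α]

/-- Length of the scheme sending the symbols of each `C k` in `|C k| - 1` channel uses and the
uncovered symbols uncoded. -/
def codelength (C : ι → Finset α) : ℕ :=
  ∑ k, (#(C k) - 1) + #(univ \ univ.biUnion C)

theorem codelength_add (C : ι → Finset α) (hC : ∀ k, (C k).Nonempty) :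
    codelength C + Fintype.card ι + #(univ.biUnion C) = ∑ k, #(C k) + Fintype.card α := by
  have hsum : ∑ k, (#(C k) - 1) + Fintype.card ι = ∑ k, #(C k) := by
    rw [← card_univ, card_eq_sum_ones, ← sum_add_distrib]
    exact sum_congr rfl fun k _ => Nat.sub_add_cancel (hC k).card_pos
  have hcompl := card_sdiff_add_card_eq_card (subset_univ (univ.biUnion C))
  rw [card_univ] at hcompl
  rw [codelength]
  omega

theorem codelength_add_card_of_pairwise_disjoint (C : ι → Finset α)
    (hC : ∀ k, (C k).Nonempty) (hd : Pairwise (Disjoint on C)) :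
    codelength C + Fintype.card ι = Fintype.card α := by
  have h := codelength_add C hC
  rw [card_biUnion fun i _ j _ hij => hd hij] at h
  omega

end Codelength

theorem stmt16 {m n : ℕ} (X : Fin m → Finset (Fin n)) (δ : ℕ)
    (K : ℕ) (C : Fin K → Finset (Fin n)) (hC : ∀ k, C k ∈ Phi X δ) :
    ∃ (K' : ℕ) (C' : Fin K' → Finset (Fin n)), K' ≤ K ∧
      (∀ k, C' k ∈ Phi X δ) ∧
      (∀ a b, a ≠ b → Disjoint (C' a) (C' b)) ∧
      (∑ k, ((C' k).card - 1)) + (Finset.univ \ Finset.univ.biUnion C').card ≤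
        (∑ k, ((C k).card - 1)) + (Finset.univ \ Finset.univ.biUnion C).card := by
  set T := disjointFromEarlier C univ
  set C' : Fin #T → Finset (Fin n) := fun k => C (T.equivFin.symm k)
  have hC' : ∀ k, C' k ∈ Phi X δ := fun k => hC _
  have hdisj : Pairwise (Disjoint on C') := fun a b hab =>
    pairwiseDisjoint_disjointFromEarlier C univ (T.equivFin.symm a).2 (T.equivFin.symm b).2
      (by simpa [Subtype.ext_iff] using hab)
  refine ⟨#T, C', (card_le_univ T).trans_eq (Fintype.card_fin K), hC', fun a b => @hdisj a b, ?_⟩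
  change codelength C' ≤ codelength C
  have hT := codelength_add_card_of_pairwise_disjoint C' (fun k => (hC' k).1) hdisj
  have hK := codelength_add C fun k => (hC k).1
  have hcount : #(univ.biUnion C) + K ≤ ∑ k, #(C k) + #T := by
    simpa using card_biUnion_add_card_le C univ
  simp only [Fintype.card_fin] at hT hK
  omega
end

section
/- Let (m,n,X,δ) be a BNSI problem with index set I = ∪_i {z ∈ F_q^n : 1 ≤ wt(z_{X_i}) ≤ 2δ}, and let (m̂,n,X̂,f) be the index coding problem constructed as follows: for every i ∈ [m], every p ∈ X_i, and every Q ⊆ X_i \ {p} with |Q| = min(|X_i|−1, 2δ−1), create a receiver demanding message p with side information index set X_i \ (Q ∪ {p}). Let I_IC = ∪_j {z ∈ F_q^n : z restricted to the j-th side information set is 0 and z_{f(j)} ≠ 0}. Then I = I_IC. -/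
open Matrix

/-! If the support `S` of `z` on `X i` satisfies `1 ≤ #S ≤ 2δ`, pick a pivot `p ∈ S` and pad
`S \ {p}` inside `X i \ {p}` to the prescribed size `min (#(X i) - 1) (2δ - 1)`; this gives `Q`.
Conversely, the support of `z` on `X i` lies in `insert p Q`, which has at most `2δ` elements, and
contains `p`. -/

open Finset

namespace Finset

variable {α : Type*} [DecidableEq α]

theorem exists_subset_sdiff_singleton_card_eq_min_and_subset_insert {S X : Finset α} {p : α}
    {k : ℕ} (hSX : S ⊆ X) (hp : p ∈ S) (hSk : #S ≤ k) :
    ∃ Q ⊆ X \ {p}, #Q = min (#X - 1) (k - 1) ∧ S ⊆ insert p Q := by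
  have hpX : p ∈ X := hSX hp
  have hcardS : #(S \ {p}) = #S - 1 := by
    rw [card_sdiff_of_subset (singleton_subset_iff.mpr hp), card_singleton]
  have hcardX : #(X \ {p}) = #X - 1 := by
    rw [card_sdiff_of_subset (singleton_subset_iff.mpr hpX), card_singleton]
  have hsub : S \ {p} ⊆ X \ {p} := sdiff_subset_sdiff hSX le_rfl
  have hlower : #(S \ {p}) ≤ min (#X - 1) (k - 1) :=
    le_min (hcardX ▸ card_le_card hsub) (by omega)
  obtain ⟨Q, hSQ, hQX, hQ⟩ :=
    exists_subsuperset_card_eq hsub hlower (hcardX ▸ min_le_left _ _)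
  refine ⟨Q, hQX, hQ, fun j hj => ?_⟩
  by_cases hjp : j = p
  · exact hjp ▸ mem_insert_self p Q
  · exact mem_insert_of_mem (hSQ (mem_sdiff.mpr ⟨hj, notMem_singleton.mpr hjp⟩))

theorem card_le_of_subset_insert {S Q : Finset α} {p : α} {k : ℕ} (hSQ : S ⊆ insert p Q)
    (hQ : #Q ≤ k - 1) (hk : 1 ≤ k) : #S ≤ k :=
  calc #S ≤ #(insert p Q) := card_le_card hSQ
    _ ≤ #Q + 1 := card_insert_le p Q
    _ ≤ k := by omega

end Finset

theorem filter_ne_zero_subset_iff {ι F : Type*} [DecidableEq ι] [Zero F] [DecidableEq F]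
    {X T : Finset ι} {z : ι → F} :
    X.filter (fun j => z j ≠ 0) ⊆ T ↔ ∀ j ∈ X \ T, z j = 0 := by
  simp only [subset_iff, mem_filter, mem_sdiff]
  grind

/-- The left side is BNSI interference at a receiver with demand set `X` (for `k = 2δ`); the right
side is interference at one of the index coding receivers `(p, X \ insert p Q)` built from it. -/
theorem wtOn_mem_Icc_iff_exists_interfered_receiver {ι F : Type*} [DecidableEq ι] [Zero F]
    [DecidableEq F] (X : Finset ι) (z : ι → F) {k : ℕ} (hk : 1 ≤ k) :
    (1 ≤ wtOn X z ∧ wtOn X z ≤ k) ↔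
      ∃ (p : ι) (Q : Finset ι), p ∈ X ∧ Q ⊆ X \ {p} ∧ #Q = min (#X - 1) (k - 1) ∧
        (∀ j ∈ X \ insert p Q, z j = 0) ∧ z p ≠ 0 := by
  set S := X.filter fun j => z j ≠ 0
  have hSX : S ⊆ X := filter_subset _ _
  change (1 ≤ #S ∧ #S ≤ k) ↔ _
  constructor
  · rintro ⟨hS1, hSk⟩
    obtain ⟨p, hp⟩ := card_pos.mp hS1
    obtain ⟨Q, hQX, hQ, hSQ⟩ :=
      exists_subset_sdiff_singleton_card_eq_min_and_subset_insert hSX hp hSk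
    exact ⟨p, Q, hSX hp, hQX, hQ, filter_ne_zero_subset_iff.mp hSQ, (mem_filter.mp hp).2⟩
  · rintro ⟨p, Q, hpX, -, hQ, hzero, hzp⟩
    have hpS : p ∈ S := mem_filter.mpr ⟨hpX, hzp⟩
    exact ⟨card_pos.mpr ⟨p, hpS⟩, card_le_of_subset_insert
      (filter_ne_zero_subset_iff.mpr hzero) (hQ ▸ min_le_right _ _) hk⟩

theorem stmt18 {F : Type*} {m n : ℕ} [Field F] [DecidableEq F]
    (X : Fin m → Finset (Fin n)) (δ : ℕ) (hδ : 1 ≤ δ) :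
    {z : Fin n → F | ∃ i, 1 ≤ wtOn (X i) z ∧ wtOn (X i) z ≤ 2 * δ} =
      {z : Fin n → F | ∃ (i : Fin m) (p : Fin n) (Q : Finset (Fin n)),
        p ∈ X i ∧ Q ⊆ X i \ {p} ∧ Q.card = min ((X i).card - 1) (2 * δ - 1) ∧
        (∀ j ∈ X i \ insert p Q, z j = 0) ∧ z p ≠ 0} := by
  ext z
  exact exists_congr fun i =>
    wtOn_mem_Icc_iff_exists_interfered_receiver (X i) z (by omega)
end
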